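/- Let ω > v²/(τ²+1)², τ ∈ ℝ \ {0,±1}, v > 0, μ > 0. Then d(ω) = inf{ S_ω(u) : u ∈ H¹_τ \ {0}, I_ω(u) = 0 } is strictly positive. More precisely, any u ∈ H¹_τ \ {0} with I_ω(u) ≤ 0 satisfies ‖u‖_{2μ+2} ≥ c for an explicit constant c > 0 depending only on τ, v, ω, μ. -/

import Mathlib

open MeasureTheory Set Filter Real

noncomputable section

/-- The space `H¹_τ`: piecewise `H¹` functions on the two half-lines with jump condition
`u(0+) = τ u(0-)` (together with the extra integrability needed for the functionals). -/
structure HtauFun (τ μ : ℝ) where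
  u : ℝ → ℝ
  d : ℝ → ℝ
  uL : ℝ
  uR : ℝ
  hderiv : ∀ x : ℝ, x ≠ 0 → HasDerivAt u (d x) x
  hlimL : Tendsto u (nhdsWithin 0 (Iio 0)) (nhds uL)
  hlimR : Tendsto u (nhdsWithin 0 (Ioi 0)) (nhds uR)
  hint2 : Integrable (fun x => (u x) ^ 2)
  hintd : Integrable (fun x => (d x) ^ 2)
  hintp : Integrable (fun x => |u x| ^ (2 * μ + 2))
  hjump : uR = τ * uL

/-- `‖u'‖₂²` taken piecewise on the two half-lines. -/
def dnormSq (g : ℝ → ℝ) : ℝ :=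
  (∫ x in Iio (0:ℝ), (g x) ^ 2) + ∫ x in Ioi (0:ℝ), (g x) ^ 2

/-- `‖u‖₂²`. -/
def l2Sq (f : ℝ → ℝ) : ℝ := ∫ x : ℝ, (f x) ^ 2

/-- `‖u‖_{2μ+2}^{2μ+2}`. -/
def lpP (μ : ℝ) (f : ℝ → ℝ) : ℝ := ∫ x : ℝ, |f x| ^ (2 * μ + 2)

/-- Squared `H¹_τ` norm. -/
def HnormSq (f g : ℝ → ℝ) : ℝ := l2Sq f + dnormSq g

/-- The Nehari functional `I_ω`. -/
def Ifun (v ω μ : ℝ) (f g : ℝ → ℝ) (aL : ℝ) : ℝ :=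
  dnormSq g - lpP μ f - v * aL ^ 2 + ω * l2Sq f

/-- The action functional `S_ω`. -/
def Sfun (v ω μ : ℝ) (f g : ℝ → ℝ) (aL : ℝ) : ℝ :=
  dnormSq g / 2 - lpP μ f / (2 * μ + 2) - v / 2 * aL ^ 2 + ω / 2 * l2Sq f

/-- The reduced action `S̃`. -/
def StilF (μ : ℝ) (f : ℝ → ℝ) : ℝ := μ / (2 * (μ + 1)) * lpP μ f

/-- `u ≠ 0` as an element of `H¹_τ`. -/
def Nonzero {τ μ : ℝ} (U : HtauFun τ μ) : Prop :=
  ¬ (U.u =ᵐ[volume] fun _ => (0:ℝ))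

/-- The ground-state level `d(ω)`: infimum of `S_ω` on the Nehari manifold. -/
def dInf (τ v ω μ : ℝ) : ℝ :=
  sInf {r : ℝ | ∃ U : HtauFun τ μ, Nonzero U ∧
    Ifun v ω μ U.u U.d U.uL = 0 ∧ r = Sfun v ω μ U.u U.d U.uL}

/-- The level of the second minimization problem: infimum of `S̃` on `{I_ω ≤ 0}`. -/
def dInf' (τ v ω μ : ℝ) : ℝ :=
  sInf {r : ℝ | ∃ U : HtauFun τ μ, Nonzero U ∧
    Ifun v ω μ U.u U.d U.uL ≤ 0 ∧ r = StilF μ U.u}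

/-!
On a half-line, integrating `(u²)' = 2uu'` from the boundary point to infinity and using
`2|uu'| ≤ ε u² + ε⁻¹ u'²` bounds the boundary value: `u(a)² ≤ ε‖u‖² + ε⁻¹‖u'‖²`. Applied at
`0±` together with `u(0+) = τ u(0-)` this gives `(τ² + 1)|u(0-)|² ≤ ε‖u‖₂² + ε⁻¹‖u'‖₂²`, and
for `ε = √ω` the quadratic part `‖u'‖² - v|u(0-)|² + ω‖u‖²` of `I_ω` dominates `C‖u‖²_{H¹}`
precisely because `ω > v² / (τ² + 1)²`. Applied at interior points with `ε = 1` the same bound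
gives `‖u‖_∞² ≤ ‖u‖²_{H¹}`, hence `‖u‖_{2μ+2}^{2μ+2} ≤ ‖u‖_{H¹}^{2μ+2}`. So `I_ω(u) ≤ 0` forces
`C‖u‖²_{H¹} ≤ ‖u‖_{2μ+2}^{2μ+2} ≤ ‖u‖_{H¹}^{2μ+2}`, a lower bound on `‖u‖_{H¹}` and then on
`‖u‖_{2μ+2}`. On the Nehari manifold `S_ω = μ/(2μ+2) ‖u‖_{2μ+2}^{2μ+2}`, and the manifold is
nonempty (rescale any nonzero `u`), which matters since `sInf ∅ = 0`.
-/

open Topology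

theorem integral_pos_of_not_ae_eq_zero {α : Type*} [MeasurableSpace α] {m : Measure α}
    {f g : α → ℝ} (hg : Integrable g m) (hg_nonneg : ∀ x, 0 ≤ g x)
    (hfg : ∀ x, g x = 0 → f x = 0) (hf : ¬ f =ᵐ[m] 0) : 0 < ∫ x, g x ∂m :=
  (integral_nonneg hg_nonneg).lt_of_ne fun h =>
    hf (((integral_eq_zero_iff_of_nonneg hg_nonneg hg).1 h.symm).mono fun x hx => hfg x hx)

theorem integrableOn_two_mul_mul_of_hasDerivAt {f f' : ℝ → ℝ} {s : Set ℝ} (hs : MeasurableSet s)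
    (hderiv : ∀ x ∈ s, HasDerivAt f (f' x) x) (hf : IntegrableOn (fun x => f x ^ 2) s)
    (hf' : IntegrableOn (fun x => f' x ^ 2) s) :
    IntegrableOn (fun x => 2 * f x * f' x) s := by
  have hf_cont : ContinuousOn f s := fun x hx => (hderiv x hx).continuousAt.continuousWithinAt
  have hf'_eq : f' =ᵐ[volume.restrict s] deriv f :=
    (ae_restrict_mem hs).mono fun x hx => (hderiv x hx).deriv.symm
  have hmeas : AEStronglyMeasurable (fun x => 2 * f x * f' x) (volume.restrict s) :=
    (aestronglyMeasurable_const.mul (hf_cont.aestronglyMeasurable hs)).mul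
      ((measurable_deriv f).aestronglyMeasurable.congr hf'_eq.symm)
  refine (hf.add hf').mono' hmeas (Eventually.of_forall fun x => ?_)
  rw [Real.norm_eq_abs, abs_mul, abs_mul, abs_two]
  simpa [sq_abs] using two_mul_le_add_sq |f x| |f' x|

theorem sq_le_of_hasDerivAt_Ioi {f f' : ℝ → ℝ} {a L ε : ℝ} (hε : 0 < ε)
    (hderiv : ∀ x ∈ Ioi a, HasDerivAt f (f' x) x) (hlim : Tendsto f (𝓝[>] a) (𝓝 L))
    (hf : IntegrableOn (fun x => f x ^ 2) (Ioi a))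
    (hf' : IntegrableOn (fun x => f' x ^ 2) (Ioi a)) :
    L ^ 2 ≤ ε * (∫ x in Ioi a, f x ^ 2) + ε⁻¹ * ∫ x in Ioi a, f' x ^ 2 := by
  have hderiv_sq : ∀ x ∈ Ioi a, HasDerivAt (fun x => f x ^ 2) (2 * f x * f' x) x := fun x hx =>
    ((hderiv x hx).pow 2).congr_deriv (by ring)
  have hint := integrableOn_two_mul_mul_of_hasDerivAt measurableSet_Ioi hderiv hf hf'
  have hFTC : ∫ x in Ioi a, 2 * f x * f' x = 0 - L ^ 2 := by
    -- Redefining `f ^ 2` at `a` as `L ^ 2` makes it continuous on `[a, ∞)`.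
    have hcont : ContinuousWithinAt (Function.update (fun x => f x ^ 2) a (L ^ 2)) (Ici a) a := by
      rw [continuousWithinAt_update_same]
      exact (hlim.pow 2).mono_left
        (nhdsWithin_mono _ fun x hx => lt_of_le_of_ne hx.1 (Ne.symm hx.2))
    convert integral_Ioi_of_hasDerivAt_of_tendsto hcont (fun x hx => ?_) hint
      ((tendsto_zero_of_hasDerivAt_of_integrableOn_Ioi hderiv_sq hint hf).congr' ?_) using 2
    · simp
    · exact (hderiv_sq x hx).congr_of_eventuallyEq
        ((eventually_ne_nhds (ne_of_gt hx)).mono fun y hy => Function.update_of_ne hy _ _)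
    · filter_upwards [eventually_gt_atTop a] with x hx
      exact (Function.update_of_ne hx.ne' (L ^ 2) (fun x => f x ^ 2)).symm
  have hbound : IntegrableOn (fun x => ε * f x ^ 2 + ε⁻¹ * f' x ^ 2) (Ioi a) :=
    (hf.const_mul ε).add (hf'.const_mul ε⁻¹)
  calc L ^ 2 = ∫ x in Ioi a, -(2 * f x * f' x) := by rw [integral_neg, hFTC]; ring
    _ ≤ ∫ x in Ioi a, (ε * f x ^ 2 + ε⁻¹ * f' x ^ 2) :=
        setIntegral_mono hint.neg hbound fun x => by
          linarith [two_mul_le_add_mul_sq (a := -f x) (b := f' x) hε]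
    _ = ε * (∫ x in Ioi a, f x ^ 2) + ε⁻¹ * ∫ x in Ioi a, f' x ^ 2 := by
        rw [integral_add (hf.const_mul ε) (hf'.const_mul ε⁻¹), integral_const_mul,
          integral_const_mul]

theorem sq_le_of_hasDerivAt_Iio {f f' : ℝ → ℝ} {a L ε : ℝ} (hε : 0 < ε)
    (hderiv : ∀ x ∈ Iio a, HasDerivAt f (f' x) x) (hlim : Tendsto f (𝓝[<] a) (𝓝 L))
    (hf : IntegrableOn (fun x => f x ^ 2) (Iio a))
    (hf' : IntegrableOn (fun x => f' x ^ 2) (Iio a)) :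
    L ^ 2 ≤ ε * (∫ x in Iio a, f x ^ 2) + ε⁻¹ * ∫ x in Iio a, f' x ^ 2 := by
  have hneg {g : ℝ → ℝ} (hg : IntegrableOn g (Iio a)) :
      IntegrableOn (fun x => g (-x)) (Ioi (-a)) := by
    rw [← (Measure.measurePreserving_neg volume).integrableOn_comp_preimage
      (Homeomorph.neg ℝ).measurableEmbedding] at hg
    simpa [Function.comp_def] using hg
  have hint (g : ℝ → ℝ) : ∫ x in Ioi (-a), g (-x) = ∫ x in Iio a, g x := by
    rw [integral_comp_neg_Ioi, neg_neg, integral_Iic_eq_integral_Iio]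
  have := sq_le_of_hasDerivAt_Ioi (f := fun x => f (-x)) (f' := fun x => -f' (-x)) hε
    (fun x hx => by
      simpa [Function.comp_def] using
        (hderiv (-x) (neg_lt.mp (mem_Ioi.mp hx) : -x < a)).scomp x (hasDerivAt_neg' x))
    (hlim.comp tendsto_neg_nhdsGT_neg) (hneg hf) (by simpa using hneg hf')
  simpa [hint (fun x => f x ^ 2), hint (fun x => f' x ^ 2)] using this

theorem integrable_comp_of_hasCompactSupport {f g : ℝ → ℝ} (hf : Continuous f)
    (hsupp : HasCompactSupport f) (hg : Continuous g) (hg0 : g 0 = 0) :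
    Integrable fun x => g (f x) :=
  (hg.comp hf).integrable_of_hasCompactSupport (hsupp.comp_left hg0)

theorem abs_rpow_two_mul_add_two {μ : ℝ} (hμ : 0 ≤ μ) (t : ℝ) :
    |t| ^ (2 * μ + 2) = (t ^ 2) ^ μ * t ^ 2 := by
  rw [show 2 * μ + 2 = 2 * (μ + 1) by ring, rpow_mul (abs_nonneg t), rpow_two, sq_abs,
    rpow_add_one' (sq_nonneg t) (by linarith)]

theorem exists_pos_mul_add_le_of_forall_le {a v ω : ℝ} (ha : 0 < a) (hv : 0 ≤ v)
    (h : v ^ 2 < ω * a ^ 2) :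
    ∃ C > 0, ∀ T X Y : ℝ, 0 ≤ X → 0 ≤ Y → (∀ ε > 0, a * T ≤ ε * X + ε⁻¹ * Y) →
      C * (X + Y) ≤ Y - v * T + ω * X := by
  have hω₀ : 0 < ω := pos_of_mul_pos_left ((sq_nonneg v).trans_lt h) (sq_nonneg a)
  -- `ε = √ω` lies strictly between `v / a` and `ω a / v`, which makes `C₁` and `C₂` positive.
  set s := √ω
  have hs : 0 < s := sqrt_pos.2 hω₀
  have hω : ω = s ^ 2 := (sq_sqrt hω₀.le).symm
  have hvs : v < a * s :=
    lt_of_pow_lt_pow_left₀ 2 (by positivity) (by rwa [mul_pow, ← hω, mul_comm])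
  set C₁ := (a * s - v) / (a * s)
  set C₂ := s * (a * s - v) / a
  refine ⟨min C₁ C₂, lt_min (by positivity) (by positivity), fun T X Y hX hY hT => ?_⟩
  have hvT : v * T ≤ v / a * (s * X + s⁻¹ * Y) := by
    rw [div_mul_eq_mul_div, le_div_iff₀ ha]
    nlinarith [mul_le_mul_of_nonneg_left (hT s hs) hv]
  calc min C₁ C₂ * (X + Y) ≤ C₂ * X + C₁ * Y := by
        nlinarith [min_le_left C₁ C₂, min_le_right C₁ C₂]
    _ = Y + ω * X - v / a * (s * X + s⁻¹ * Y) := by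
        rw [hω]; simp only [C₁, C₂]; field_simp; ring
    _ ≤ Y - v * T + ω * X := by linarith

namespace HtauFun

variable {τ μ : ℝ} (U : HtauFun τ μ)

theorem sq_uL_le {ε : ℝ} (hε : 0 < ε) :
    U.uL ^ 2 ≤ ε * (∫ x in Iio 0, U.u x ^ 2) + ε⁻¹ * ∫ x in Iio 0, U.d x ^ 2 :=
  sq_le_of_hasDerivAt_Iio hε (fun x hx => U.hderiv x hx.out.ne) U.hlimL U.hint2.integrableOn
    U.hintd.integrableOn

theorem sq_uR_le {ε : ℝ} (hε : 0 < ε) :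
    U.uR ^ 2 ≤ ε * (∫ x in Ioi 0, U.u x ^ 2) + ε⁻¹ * ∫ x in Ioi 0, U.d x ^ 2 :=
  sq_le_of_hasDerivAt_Ioi hε (fun x hx => U.hderiv x hx.out.ne') U.hlimR U.hint2.integrableOn
    U.hintd.integrableOn

theorem l2Sq_eq : l2Sq U.u = (∫ x in Iio 0, U.u x ^ 2) + ∫ x in Ioi 0, U.u x ^ 2 := by
  rw [l2Sq, ← intervalIntegral.integral_Iic_add_Ioi U.hint2.integrableOn U.hint2.integrableOn,
    integral_Iic_eq_integral_Iio]

theorem dnormSq_eq : dnormSq U.d = ∫ x, U.d x ^ 2 := by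
  rw [dnormSq, ← intervalIntegral.integral_Iic_add_Ioi U.hintd.integrableOn U.hintd.integrableOn,
    integral_Iic_eq_integral_Iio]

theorem dnormSq_nonneg : 0 ≤ dnormSq U.d :=
  U.dnormSq_eq ▸ integral_nonneg fun _ => sq_nonneg _

theorem trace_le {ε : ℝ} (hε : 0 < ε) :
    (τ ^ 2 + 1) * U.uL ^ 2 ≤ ε * l2Sq U.u + ε⁻¹ * dnormSq U.d := by
  have hR := U.sq_uR_le hε
  rw [U.hjump, mul_pow] at hR
  rw [l2Sq_eq, dnormSq]
  linear_combination U.sq_uL_le hε + hR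

theorem sq_le_HnormSq {x : ℝ} (hx : x ≠ 0) : U.u x ^ 2 ≤ HnormSq U.u U.d := by
  have hlim : Tendsto U.u (𝓝 x) (𝓝 (U.u x)) := (U.hderiv x hx).continuousAt.tendsto
  have hu (s : Set ℝ) : ∫ t in s, U.u t ^ 2 ≤ l2Sq U.u :=
    setIntegral_le_integral U.hint2 (Eventually.of_forall fun t => sq_nonneg _)
  have hd (s : Set ℝ) : ∫ t in s, U.d t ^ 2 ≤ dnormSq U.d :=
    U.dnormSq_eq ▸ setIntegral_le_integral U.hintd (Eventually.of_forall fun t => sq_nonneg _)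
  rw [HnormSq]
  rcases hx.lt_or_gt with hx | hx
  · have := sq_le_of_hasDerivAt_Iio one_pos (fun t ht => U.hderiv t (ht.out.trans hx).ne)
      (hlim.mono_left nhdsWithin_le_nhds) U.hint2.integrableOn U.hintd.integrableOn
    rw [one_mul, inv_one, one_mul] at this
    linarith [hu (Iio x), hd (Iio x)]
  · have := sq_le_of_hasDerivAt_Ioi one_pos (fun t ht => U.hderiv t (hx.trans ht.out).ne')
      (hlim.mono_left nhdsWithin_le_nhds) U.hint2.integrableOn U.hintd.integrableOn
    rw [one_mul, inv_one, one_mul] at this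
    linarith [hu (Ioi x), hd (Ioi x)]

theorem lpP_le_mul_l2Sq (hμ : 0 ≤ μ) : lpP μ U.u ≤ HnormSq U.u U.d ^ μ * l2Sq U.u := by
  have hpt : ∀ᵐ x, |U.u x| ^ (2 * μ + 2) ≤ HnormSq U.u U.d ^ μ * U.u x ^ 2 := by
    filter_upwards [Measure.ae_ne volume 0] with x hx
    rw [abs_rpow_two_mul_add_two hμ]
    exact mul_le_mul_of_nonneg_right (rpow_le_rpow (sq_nonneg _) (U.sq_le_HnormSq hx) hμ)
      (sq_nonneg _)
  rw [lpP, l2Sq, ← integral_const_mul]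
  exact integral_mono_ae U.hintp (U.hint2.const_mul _) hpt

theorem l2Sq_pos (hU : Nonzero U) : 0 < l2Sq U.u :=
  integral_pos_of_not_ae_eq_zero U.hint2 (fun _ => sq_nonneg _)
    (fun _ h => pow_eq_zero_iff two_ne_zero |>.1 h) hU

theorem lpP_pos (hμ : -1 < μ) (hU : Nonzero U) : 0 < lpP μ U.u :=
  integral_pos_of_not_ae_eq_zero U.hintp (fun _ => rpow_nonneg (abs_nonneg _) _)
    (fun _ h => abs_eq_zero.1 ((rpow_eq_zero (abs_nonneg _) (by linarith)).1 h)) hU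

theorem HnormSq_pos (hU : Nonzero U) : 0 < HnormSq U.u U.d :=
  add_pos_of_pos_of_nonneg (U.l2Sq_pos hU) U.dnormSq_nonneg

theorem exists_pos_mul_HnormSq_le {v ω : ℝ} (hv : 0 ≤ v) (hω : v ^ 2 / (τ ^ 2 + 1) ^ 2 < ω) :
    ∃ C > 0, ∀ U : HtauFun τ μ,
      C * HnormSq U.u U.d ≤ dnormSq U.d - v * U.uL ^ 2 + ω * l2Sq U.u := by
  obtain ⟨C, hC, hle⟩ := exists_pos_mul_add_le_of_forall_le (by positivity) hv
    ((div_lt_iff₀ (by positivity)).1 hω)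
  exact ⟨C, hC, fun U => hle _ _ _ (integral_nonneg fun _ => sq_nonneg _) U.dnormSq_nonneg
    fun ε hε => U.trace_le hε⟩

theorem exists_pos_le_lpP_of_Ifun_nonpos {v ω : ℝ} (hv : 0 ≤ v) (hμ : 0 < μ)
    (hω : v ^ 2 / (τ ^ 2 + 1) ^ 2 < ω) :
    ∃ c > 0, ∀ U : HtauFun τ μ, Nonzero U → Ifun v ω μ U.u U.d U.uL ≤ 0 → c ≤ lpP μ U.u := by
  obtain ⟨C, hC, hcoer⟩ := exists_pos_mul_HnormSq_le (μ := μ) hv hω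
  refine ⟨C * C ^ μ⁻¹, by positivity, fun U hU hI => ?_⟩
  set H := HnormSq U.u U.d
  have hH : 0 < H := U.HnormSq_pos hU
  have hlow : C * H ≤ lpP μ U.u := by
    have := hcoer U
    rw [Ifun] at hI
    linarith
  have hl2 : l2Sq U.u ≤ H := le_add_of_nonneg_right U.dnormSq_nonneg
  have hup : lpP μ U.u ≤ H ^ μ * H :=
    (U.lpP_le_mul_l2Sq hμ.le).trans (mul_le_mul_of_nonneg_left hl2 (by positivity))
  have hCH : C ^ μ⁻¹ ≤ H :=
    (rpow_inv_le_iff_of_pos hC.le hH.le hμ).2 (le_of_mul_le_mul_right (hlow.trans hup) hH)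
  exact (mul_le_mul_of_nonneg_left hCH hC.le).trans hlow

def ofHasCompactSupport (hμ : -1 < μ) {f : ℝ → ℝ} (hf : ContDiff ℝ 1 f)
    (hsupp : HasCompactSupport f) (h0 : f 0 = 0) : HtauFun τ μ where
  u := f
  d := deriv f
  uL := 0
  uR := 0
  hderiv x _ := (hf.differentiable one_ne_zero x).hasDerivAt
  hlimL := (hf.continuous.tendsto' 0 0 h0).mono_left nhdsWithin_le_nhds
  hlimR := (hf.continuous.tendsto' 0 0 h0).mono_left nhdsWithin_le_nhds
  hint2 := integrable_comp_of_hasCompactSupport hf.continuous hsupp (continuous_pow 2)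
    (zero_pow two_ne_zero)
  hintd := integrable_comp_of_hasCompactSupport (hf.continuous_deriv le_rfl) hsupp.deriv
    (continuous_pow 2) (zero_pow two_ne_zero)
  hintp := integrable_comp_of_hasCompactSupport hf.continuous hsupp
    (continuous_abs.rpow_const fun _ => Or.inr (by linarith))
    (by simp [zero_rpow (by linarith : 2 * μ + 2 ≠ 0)])
  hjump := by ring

theorem exists_nonzero (hμ : -1 < μ) : ∃ U : HtauFun τ μ, Nonzero U := by
  let b : ContDiffBump (2 : ℝ) := ⟨1 / 2, 1, by norm_num, by norm_num⟩
  have hb0 : b 0 = 0 := b.zero_of_le_dist (by norm_num [b, Real.dist_eq])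
  refine ⟨ofHasCompactSupport hμ b.contDiff b.hasCompactSupport hb0, fun h => ?_⟩
  have hb : (b : ℝ → ℝ) = 0 := (b.continuous.ae_eq_iff_eq volume continuous_const).1 h
  simpa [b.one_of_mem_closedBall (Metric.mem_closedBall_self (by norm_num))] using congrFun hb 2

def smul (c : ℝ) : HtauFun τ μ where
  u x := c * U.u x
  d x := c * U.d x
  uL := c * U.uL
  uR := c * U.uR
  hderiv x hx := (U.hderiv x hx).const_mul c
  hlimL := U.hlimL.const_mul c
  hlimR := U.hlimR.const_mul c
  hint2 := by simpa only [mul_pow] using U.hint2.const_mul (c ^ 2)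
  hintd := by simpa only [mul_pow] using U.hintd.const_mul (c ^ 2)
  hintp := by
    simpa only [abs_mul, mul_rpow (abs_nonneg c) (abs_nonneg _)] using
      U.hintp.const_mul (|c| ^ (2 * μ + 2))
  hjump := by rw [U.hjump]; ring

theorem nonzero_smul {c : ℝ} (hc : c ≠ 0) (hU : Nonzero U) : Nonzero (U.smul c) := fun h =>
  hU (h.mono fun _ hx => (mul_eq_zero.1 hx).resolve_left hc)

theorem Ifun_smul (v ω c : ℝ) :
    Ifun v ω μ (U.smul c).u (U.smul c).d (U.smul c).uL =
      c ^ 2 * (dnormSq U.d - v * U.uL ^ 2 + ω * l2Sq U.u) - |c| ^ (2 * μ + 2) * lpP μ U.u := by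
  simp only [Ifun, dnormSq, l2Sq, lpP, smul, mul_pow, abs_mul,
    mul_rpow (abs_nonneg c) (abs_nonneg _), integral_const_mul]
  ring

theorem exists_Ifun_eq_zero {v ω : ℝ} (hμ : 0 < μ) (hU : Nonzero U)
    (hQ : 0 < dnormSq U.d - v * U.uL ^ 2 + ω * l2Sq U.u) :
    ∃ V : HtauFun τ μ, Nonzero V ∧ Ifun v ω μ V.u V.d V.uL = 0 := by
  set Q := dnormSq U.d - v * U.uL ^ 2 + ω * l2Sq U.u
  have hP := U.lpP_pos (by linarith) hU
  set c := (Q / lpP μ U.u) ^ (2 * μ)⁻¹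
  have hc : 0 < c := by positivity
  have hc_pow : |c| ^ (2 * μ + 2) = Q / lpP μ U.u * c ^ 2 := by
    rw [abs_of_pos hc, rpow_add hc, ← rpow_mul (by positivity), inv_mul_cancel₀ (by positivity),
      rpow_one, rpow_two]
  refine ⟨U.smul c, U.nonzero_smul hc.ne' hU, ?_⟩
  rw [Ifun_smul, hc_pow]
  field_simp
  ring

end HtauFun

theorem Sfun_eq_half_Ifun_add_StilF {μ : ℝ} (hμ : μ + 1 ≠ 0) (v ω : ℝ) (f g : ℝ → ℝ) (a : ℝ) :
    Sfun v ω μ f g a = Ifun v ω μ f g a / 2 + StilF μ f := by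
  have : 2 * μ + 2 ≠ 0 := by contrapose! hμ; linarith
  simp only [Sfun, Ifun, StilF]
  field_simp
  ring

theorem dInf_positive_general
    (τ v ω μ : ℝ)
    (hv : 0 < v) (hμ : 0 < μ) (hω : ω > v ^ 2 / (τ ^ 2 + 1) ^ 2) :
    0 < dInf τ v ω μ ∧
    ∃ c : ℝ, 0 < c ∧ ∀ U : HtauFun τ μ, Nonzero U →
      Ifun v ω μ U.u U.d U.uL ≤ 0 → (lpP μ U.u) ^ (1 / (2 * μ + 2)) ≥ c := by
  obtain ⟨c, hc, hle⟩ := HtauFun.exists_pos_le_lpP_of_Ifun_nonpos hv.le hμ hω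
  obtain ⟨C, hC, hcoer⟩ := HtauFun.exists_pos_mul_HnormSq_le (μ := μ) hv.le hω
  obtain ⟨U₀, hU₀⟩ := HtauFun.exists_nonzero (τ := τ) (by linarith : -1 < μ)
  obtain ⟨V, hV, hIV⟩ := U₀.exists_Ifun_eq_zero hμ hU₀
    ((mul_pos hC (U₀.HnormSq_pos hU₀)).trans_le (hcoer U₀))
  refine ⟨?_, c ^ (1 / (2 * μ + 2)), by positivity,
    fun U hU hI => rpow_le_rpow hc.le (hle U hU hI) (by positivity)⟩
  refine (by positivity : 0 < μ / (2 * (μ + 1)) * c).trans_le (le_csInf ⟨_, V, hV, hIV, rfl⟩ ?_)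
  rintro _ ⟨U, hU, hI, rfl⟩
  rw [Sfun_eq_half_Ifun_add_StilF (by linarith), hI, zero_div, zero_add, StilF]
  exact mul_le_mul_of_nonneg_left (hle U hU hI.le) (by positivity)

/-- `d(ω) > 0`; more precisely there is `c > 0` (depending only on `τ,v,ω,μ`)
such that every nonzero `u ∈ H¹_τ` with `I_ω(u) ≤ 0` satisfies `‖u‖_{2μ+2} ≥ c`. -/
theorem dInf_positive
    (τ v ω μ : ℝ) (hτ0 : τ ≠ 0) (hτ1 : τ ≠ 1) (hτm1 : τ ≠ -1)
    (hv : 0 < v) (hμ : 0 < μ) (hω : ω > v ^ 2 / (τ ^ 2 + 1) ^ 2) :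
    0 < dInf τ v ω μ ∧
    ∃ c : ℝ, 0 < c ∧ ∀ U : HtauFun τ μ, Nonzero U →
      Ifun v ω μ U.u U.d U.uL ≤ 0 → (lpP μ U.u) ^ (1 / (2 * μ + 2)) ≥ c :=
  dInf_positive_general τ v ω μ hv hμ hω
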